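/- Let a_1 > 0 and a_2, ..., a_m ≥ 0 be real numbers with partial sums s_i = a_1 + ... + a_i. Then ∑_{i=1}^m a_i / s_i ≤ 1 + ln(s_m / a_1). -/

import Mathlib

/-! The bound `(y - x) / y = 1 - x / y ≤ log (y / x)` turns each term `a i / s i` with `i ≥ 2` into
at most `log s i - log s (i - 1)`; these telescope to `log (s m / s 1)`, and the first term is
`a 1 / s 1 = 1`. -/

open Finset

lemma sub_div_le_log_div {x y : ℝ} (hx : 0 < x) (hy : 0 < y) :
    (y - x) / y ≤ Real.log (y / x) := by
  calc (y - x) / y = 1 - (y / x)⁻¹ := by field_simp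
    _ ≤ Real.log (y / x) := Real.one_sub_inv_le_log_of_pos (by positivity)

lemma sum_Ico_sub_div_le_log_div {s : ℕ → ℝ} {k m : ℕ} (hkm : k ≤ m)
    (hs : ∀ i ∈ Icc k m, 0 < s i) :
    ∑ i ∈ Ico k m, (s (i + 1) - s i) / s (i + 1) ≤ Real.log (s m / s k) := by
  have hs' : ∀ i ∈ Ico k m, 0 < s i ∧ 0 < s (i + 1) := fun i hi => by
    obtain ⟨hki, him⟩ := mem_Ico.1 hi
    exact ⟨hs i (mem_Icc.2 ⟨hki, him.le⟩), hs (i + 1) (mem_Icc.2 ⟨by omega, him⟩)⟩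
  calc ∑ i ∈ Ico k m, (s (i + 1) - s i) / s (i + 1)
      ≤ ∑ i ∈ Ico k m, (Real.log (s (i + 1)) - Real.log (s i)) := by
        refine sum_le_sum fun i hi => ?_
        obtain ⟨hi, hi'⟩ := hs' i hi
        rw [← Real.log_div hi'.ne' hi.ne']
        exact sub_div_le_log_div hi hi'
    _ = Real.log (s m / s k) := by
        rw [sum_Ico_sub (fun i => Real.log (s i)) hkm,
          Real.log_div (hs m (right_mem_Icc.2 hkm)).ne' (hs k (left_mem_Icc.2 hkm)).ne']

lemma sum_Icc_one_eq_add_sum_Ico_succ {M : Type*} [AddCommMonoid M] (f : ℕ → M) {m : ℕ} (hm : 1 ≤ m) :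
    ∑ i ∈ Icc 1 m, f i = f 1 + ∑ i ∈ Ico 1 m, f (i + 1) := by
  rw [← Ico_add_one_right_eq_Icc, sum_eq_sum_Ico_succ_bot (by omega), sum_Ico_add']

/-- For `a 1 > 0`, `a i ≥ 0` (`2 ≤ i ≤ m`) and partial sums `s i = a 1 + ⋯ + a i`,
`∑_{i=1}^m a i / s i ≤ 1 + ln (s m / a 1)`. -/
theorem stmt_1 (m : ℕ) (hm : 1 ≤ m) (a : ℕ → ℝ)
    (ha1 : 0 < a 1) (ha : ∀ i, 2 ≤ i → i ≤ m → 0 ≤ a i) :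
    ∑ i ∈ Finset.Icc 1 m, a i / (∑ j ∈ Finset.Icc 1 i, a j) ≤
      1 + Real.log ((∑ j ∈ Finset.Icc 1 m, a j) / a 1) := by
  set s : ℕ → ℝ := fun i => ∑ j ∈ Icc 1 i, a j
  have hs1 : s 1 = a 1 := by simp [s]
  have hs_pos : ∀ i ∈ Icc 1 m, 0 < s i := fun i hi => by
    obtain ⟨h1i, him⟩ := mem_Icc.1 hi
    refine ha1.trans_le (single_le_sum (fun j hj => ?_) (mem_Icc.2 ⟨le_rfl, h1i⟩))
    obtain ⟨h1j, hji⟩ := mem_Icc.1 hj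
    rcases h1j.eq_or_lt with rfl | h2j
    · exact ha1.le
    · exact ha j h2j (hji.trans him)
  have hs_succ : ∀ i, s (i + 1) - s i = a (i + 1) := fun i => by
    simp only [s, sum_Icc_succ_top (by omega : 1 ≤ i + 1), add_sub_cancel_left]
  calc ∑ i ∈ Icc 1 m, a i / s i
      = a 1 / s 1 + ∑ i ∈ Ico 1 m, (s (i + 1) - s i) / s (i + 1) := by
        simp only [sum_Icc_one_eq_add_sum_Ico_succ _ hm, hs_succ]
    _ ≤ 1 + Real.log (s m / a 1) := by
        rw [hs1, div_self ha1.ne']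
        gcongr
        simpa only [hs1] using sum_Ico_sub_div_le_log_div hm hs_pos
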